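/- arXiv:1405.1094 — 2 statements merged into one kernel-verified Lean document; each statement's English description precedes it below -/
import Mathlib

section
/- In K = ℚ(ζ_{256} + ζ_{256}^{-1}), the element b_0 − b_3 + b_4 − b_{22} − b_{34} − b_{53} has absolute norm 6143, where b_0 = 1 and b_j = ζ_{256}^j + ζ_{256}^{-j}. -/
open NumberField
open scoped IntermediateField

instance (n : ℕ+) : NumberField (CyclotomicField n ℚ) :=
  inferInstance

/-!
Write `x = F(ζ)` with `F ∈ ℤ[X]`, using `ζ⁻ʲ = -ζ^(128-j)`. The conjugates of `ζ` over `ℚ` are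
the `ζ^j` with `j` odd, so `N_{ℚ(ζ)/ℚ}(x) = ∏_{j odd} F(ζ^j)`. Pairing `ζ^j` with
`ζ^(j+128) = -ζ^j` turns this into the same product for `ζ²` and the Graeffe transform `G`,
`G(X²) = F(X) F(-X)`; after seven such steps the product is a value at `-1`, an integer which
evaluates to `6143²`. Finally `ζ` is a root of `X² - (ζ + ζ⁻¹) X + 1` but does not lie in `K`,
which is fixed by `ζ ↦ ζ⁻¹`; so `[ℚ(ζ) : K] = 2` and `N_{K/ℚ}(x)² = 6143²`.
-/

-- A list `[a₀, a₁, …]` stands for the polynomial `a₀ + a₁ X + ⋯`; unlike `ℤ[X]`, the kernel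
-- can compute with it.
namespace CoeffList

variable {R S : Type*} [CommRing R] [CommRing S]

def add : List ℤ → List ℤ → List ℤ
  | [], b => b
  | a, [] => a
  | a :: as, b :: bs => (a + b) :: add as bs

def mul : List ℤ → List ℤ → List ℤ
  | [], _ => []
  | a :: as, b => add (b.map (a * ·)) (0 :: mul as b)

def evens : List ℤ → List ℤ
  | a :: _ :: l => a :: evens l
  | l => l

def odds : List ℤ → List ℤ
  | _ :: b :: l => b :: odds l
  | _ => []

def eval (z : R) : List ℤ → R
  | [] => 0
  | a :: l => a + z * eval z l

@[simp] theorem eval_nil (z : R) : eval z [] = 0 := rfl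

@[simp] theorem eval_cons (z : R) (a : ℤ) (l : List ℤ) :
    eval z (a :: l) = a + z * eval z l := rfl

theorem eval_add (z : R) : ∀ a b : List ℤ, eval z (add a b) = eval z a + eval z b
  | [], b => by simp [add]
  | a :: as, [] => by simp [add]
  | a :: as, b :: bs => by simp only [add, eval_cons, eval_add z as bs]; push_cast; ring

theorem eval_map_mul (z : R) (c : ℤ) (l : List ℤ) : eval z (l.map (c * ·)) = c * eval z l := by
  induction l with
  | nil => simp
  | cons a l ih => simp only [List.map_cons, eval_cons, ih]; push_cast; ring

theorem eval_map_neg (z : R) (l : List ℤ) : eval z (l.map (- ·)) = - eval z l := by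
  induction l with
  | nil => simp
  | cons a l ih => simp only [List.map_cons, eval_cons, ih]; push_cast; ring

theorem eval_mul (z : R) (a b : List ℤ) : eval z (mul a b) = eval z a * eval z b := by
  induction a with
  | nil => simp [mul]
  | cons a as ih => simp only [mul, eval_add, eval_map_mul, eval_cons, ih]; push_cast; ring

theorem eval_append (z : R) (a b : List ℤ) :
    eval z (a ++ b) = eval z a + z ^ a.length * eval z b := by
  induction a with
  | nil => simp
  | cons a as ih => simp only [List.cons_append, eval_cons, ih, List.length_cons]; ring

theorem eval_replicate_zero (z : R) (n : ℕ) : eval z (List.replicate n 0) = 0 := by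
  induction n with
  | zero => rfl
  | succ n ih => simp [List.replicate_succ, ih]

theorem eval_eq_evens_add_odds (z : R) : ∀ l : List ℤ,
    eval z l = eval (z ^ 2) (evens l) + z * eval (z ^ 2) (odds l)
  | [] => by simp [evens, odds]
  | [a] => by simp [evens, odds]
  | a :: b :: l => by
    simp only [evens, odds, eval_cons, eval_eq_evens_add_odds z l]; ring

theorem map_eval {F : Type*} [FunLike F R S] [RingHomClass F R S] (f : F) (z : R)
    (l : List ℤ) : f (eval z l) = eval (f z) l := by
  induction l with
  | nil => simp
  | cons a l ih => simp [ih]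

theorem intCast_eval (z : ℤ) (l : List ℤ) : ((eval z l : ℤ) : R) = eval (z : R) l :=
  map_eval (Int.castRingHom R) z l

-- `f = E(X²) + X O(X²)` gives `f(X) f(-X) = E(X²)² - X² O(X²)²`.
def graeffe (l : List ℤ) : List ℤ :=
  add (mul (evens l) (evens l)) (0 :: (mul (odds l) (odds l)).map (- ·))

theorem eval_sq_graeffe (z : R) (l : List ℤ) :
    eval (z ^ 2) (graeffe l) = eval z l * eval (-z) l := by
  rw [eval_eq_evens_add_odds z l, eval_eq_evens_add_odds (-z) l, neg_sq, graeffe, eval_add,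
    eval_mul, eval_cons, eval_map_neg, eval_mul]
  push_cast; ring

def graeffeNorm : ℕ → List ℤ → ℤ
  | 0, l => eval (-1) l
  | k + 1, l => graeffeNorm k (graeffe l)

theorem prod_eval_odd_pow_graeffe {ω : R} {m : ℕ} (hω : ω ^ (2 * m) = -1) (l : List ℤ) :
    ∏ i ∈ Finset.range (2 * m), eval (ω ^ (2 * i + 1)) l
      = ∏ i ∈ Finset.range m, eval ((ω ^ 2) ^ (2 * i + 1)) (graeffe l) := by
  rw [two_mul, Finset.prod_range_add, ← Finset.prod_mul_distrib]
  refine Finset.prod_congr rfl fun i _ => ?_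
  have hshift : ω ^ (2 * (m + i) + 1) = -ω ^ (2 * i + 1) := by
    rw [show 2 * (m + i) + 1 = 2 * m + (2 * i + 1) by ring, pow_add, hω, neg_one_mul]
  rw [hshift, show (ω ^ 2) ^ (2 * i + 1) = (ω ^ (2 * i + 1)) ^ 2 by ring, eval_sq_graeffe]

theorem prod_eval_odd_pow_eq_graeffeNorm (k : ℕ) {ω : R} (hω : ω ^ 2 ^ k = -1) (l : List ℤ) :
    ∏ i ∈ Finset.range (2 ^ k), eval (ω ^ (2 * i + 1)) l = graeffeNorm k l := by
  induction k generalizing ω l with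
  | zero =>
    rw [pow_zero, pow_one] at hω
    simp [graeffeNorm, hω, intCast_eval]
  | succ k ih =>
    rw [pow_succ'] at hω ⊢
    rw [prod_eval_odd_pow_graeffe hω, ih (by rw [← pow_mul, hω]), graeffeNorm]

def ofTerms : List (ℕ × ℤ) → List ℤ
  | [] => []
  | (n, c) :: ts => add (List.replicate n 0 ++ [c]) (ofTerms ts)

theorem eval_ofTerms (z : R) (ts : List (ℕ × ℤ)) :
    eval z (ofTerms ts) = (ts.map fun t => t.2 * z ^ t.1).sum := by
  induction ts with
  | nil => rfl
  | cons t ts ih =>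
    obtain ⟨n, c⟩ := t
    simp only [ofTerms, eval_add, eval_append, eval_replicate_zero, ih, List.length_replicate,
      List.map_cons, List.sum_cons, eval_cons, eval_nil]
    ring

end CoeffList

open CoeffList

theorem IsPrimitiveRoot.pow_two_pow_eq_neg_one {R : Type*} [CommRing R] [IsDomain R] {ζ : R}
    {k : ℕ} (hζ : IsPrimitiveRoot ζ (2 ^ (k + 1))) : ζ ^ 2 ^ k = -1 := by
  have h := hζ.pow_of_dvd (pow_ne_zero k two_ne_zero) (pow_dvd_pow 2 k.le_succ)
  rw [pow_succ, Nat.mul_div_cancel_left _ (by positivity)] at h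
  exact h.eq_neg_one_of_two_right

theorem ZMod.prod_units_two_pow_eq_prod_odd {M : Type*} [CommMonoid M] (k : ℕ) (f : ℕ → M) :
    ∏ u : (ZMod (2 ^ (k + 1)))ˣ, f (u : ZMod (2 ^ (k + 1))).val
      = ∏ i ∈ Finset.range (2 ^ k), f (2 * i + 1) := by
  have hcop (i : ℕ) : (2 * i + 1).Coprime (2 ^ (k + 1)) :=
    (Nat.coprime_pow_right_iff k.succ_pos _ _).mpr
      (Nat.coprime_two_right.mpr (odd_two_mul_add_one i))
  have hval {i : ℕ} (hi : i < 2 ^ k) : ((2 * i + 1 : ℕ) : ZMod (2 ^ (k + 1))).val = 2 * i + 1 :=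
    ZMod.val_natCast_of_lt (by rw [pow_succ]; omega)
  symm
  refine Finset.prod_nbij' (fun i => ZMod.unitOfCoprime (2 * i + 1) (hcop i))
    (fun u => (u : ZMod (2 ^ (k + 1))).val / 2) (by simp) ?_ ?_ ?_ ?_
  · intro u _
    have hu := ZMod.val_lt (u : ZMod (2 ^ (k + 1)))
    have h2 : 2 ^ (k + 1) = 2 ^ k * 2 := pow_succ 2 k
    rw [Finset.mem_range]; omega
  · intro i hi
    rw [Finset.mem_range] at hi
    simp only [ZMod.coe_unitOfCoprime, hval hi]; omega
  · intro u _
    have hodd : Odd (u : ZMod (2 ^ (k + 1))).val :=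
      Nat.coprime_two_right.mp ((Nat.coprime_pow_right_iff k.succ_pos _ _).mp
        (ZMod.val_coe_unit_coprime u))
    ext
    simp only [ZMod.coe_unitOfCoprime]
    rw [Nat.two_mul_div_two_add_one_of_odd hodd, ZMod.natCast_zmod_val]
  · intro i hi
    rw [Finset.mem_range] at hi
    simp only [ZMod.coe_unitOfCoprime, hval hi]

namespace IsCyclotomicExtension.Rat

variable {L : Type*} [Field L] [NumberField L]

theorem exists_algEquiv_apply_eq_inv {n : ℕ} [NeZero n] [IsCyclotomicExtension {n} ℚ L]
    {ζ : L} (hζ : ζ ^ n = 1) : ∃ σ : Gal(L/ℚ), σ ζ = ζ⁻¹ := by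
  refine ⟨(galEquivZMod n L).symm (-1), ?_⟩
  rw [galEquivZMod_apply_of_pow_eq _ _ _ hζ, MulEquiv.apply_symm_apply]
  refine eq_inv_of_mul_eq_one_left ?_
  obtain ⟨c, hc⟩ : n ∣ ((-1 : (ZMod n)ˣ) : ZMod n).val + 1 := by
    rw [← ZMod.natCast_eq_zero_iff]; push_cast; simp
  rw [← pow_succ, hc, pow_mul, hζ, one_pow]

end IsCyclotomicExtension.Rat

namespace IsPrimitiveRoot

open IsCyclotomicExtension.Rat Polynomial

variable {L : Type*} [Field L] [NumberField L] {ζ : L}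

theorem norm_eval_eq_graeffeNorm {k : ℕ} [IsCyclotomicExtension {2 ^ (k + 1)} ℚ L]
    (hζ : IsPrimitiveRoot ζ (2 ^ (k + 1))) (l : List ℤ) :
    Algebra.norm ℚ (eval ζ l) = graeffeNorm k l := by
  have : IsGalois ℚ L := IsCyclotomicExtension.isGalois {2 ^ (k + 1)} ℚ L
  apply (algebraMap ℚ L).injective
  rw [Algebra.norm_eq_prod_automorphisms, map_intCast,
    ← prod_eval_odd_pow_eq_graeffeNorm k hζ.pow_two_pow_eq_neg_one l,
    ← ZMod.prod_units_two_pow_eq_prod_odd k (fun j => eval (ζ ^ j) l)]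
  refine Fintype.prod_equiv (galEquivZMod (2 ^ (k + 1)) L).toEquiv _ _ fun σ => ?_
  rw [map_eval, galEquivZMod_apply_of_pow_eq _ _ σ hζ.pow_eq_one]
  rfl

variable {n : ℕ} [NeZero n] [IsCyclotomicExtension {n} ℚ L]

theorem notMem_adjoin_add_inv (hζ : IsPrimitiveRoot ζ n) (hn : 2 < n) :
    ζ ∉ ℚ⟮ζ + ζ⁻¹⟯ := by
  obtain ⟨σ, hσ⟩ := exists_algEquiv_apply_eq_inv hζ.pow_eq_one
  have hfix : ℚ⟮ζ + ζ⁻¹⟯ ≤ IntermediateField.fixedField (Subgroup.zpowers σ) := by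
    rw [IntermediateField.adjoin_simple_le_iff, IntermediateField.mem_fixedField_iff]
    intro τ hτ
    have hστ : σ ∈ MulAction.stabilizer Gal(L/ℚ) (ζ + ζ⁻¹) := by
      simp [AlgEquiv.smul_def, hσ, add_comm]
    exact Subgroup.zpowers_le.mpr hστ hτ
  intro hmem
  have hζσ : σ ζ = ζ :=
    (IntermediateField.mem_fixedField_iff _ _).mp (hfix hmem) σ (Subgroup.mem_zpowers σ)
  have hsq : ζ ^ 2 = 1 := by
    rw [sq]; nth_rw 1 [← hζσ]
    rw [hσ, inv_mul_cancel₀ (hζ.ne_zero (NeZero.ne n))]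
  exact hζ.pow_ne_one_of_pos_of_lt two_ne_zero hn hsq

theorem finrank_adjoin_add_inv (hζ : IsPrimitiveRoot ζ n) (hn : 2 < n) :
    Module.finrank ℚ⟮ζ + ζ⁻¹⟯ L = 2 := by
  set K := ℚ⟮ζ + ζ⁻¹⟯
  have hint : IsIntegral K ζ := .of_finite K ζ
  have htop : K⟮ζ⟯ = ⊤ := IntermediateField.adjoin_eq_top_of_adjoin_eq_top ℚ
    (IntermediateField.adjoin_eq_top_of_algebra _ _
      (IsCyclotomicExtension.adjoin_primitive_root_eq_top hζ))
  rw [← IntermediateField.finrank_top', ← htop, IntermediateField.adjoin.finrank hint]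
  refine le_antisymm ?_ ((minpoly.two_le_natDegree_iff hint).mpr ?_)
  · let t : K := ⟨ζ + ζ⁻¹, IntermediateField.mem_adjoin_simple_self ℚ _⟩
    have hmonic : (X ^ 2 - C t * X + 1).Monic := by monicity!
    have hdeg : (X ^ 2 - C t * X + 1).natDegree = 2 := by compute_degree!
    have hroot : aeval ζ (X ^ 2 - C t * X + 1) = 0 := by
      simp only [map_add, map_sub, map_mul, map_pow, map_one, aeval_X, aeval_C,
        IntermediateField.algebraMap_apply, t]
      linear_combination (-1 : L) * mul_inv_cancel₀ (hζ.ne_zero (NeZero.ne n))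
    rw [← hdeg]
    exact natDegree_le_natDegree (minpoly.degree_le_of_ne_zero K ζ hmonic.ne_zero hroot)
  · rintro ⟨c, hc⟩
    exact hζ.notMem_adjoin_add_inv hn (hc ▸ c.2 : ζ ∈ K)

end IsPrimitiveRoot

theorem IntermediateField.norm_coe_eq_norm_pow_finrank {F L : Type*} [Field F] [Field L]
    [Algebra F L] [FiniteDimensional F L] (K : IntermediateField F L) (x : K) :
    Algebra.norm F (x : L) = Algebra.norm F x ^ Module.finrank K L := by
  rw [← Algebra.norm_norm (S := K), ← IntermediateField.algebraMap_apply,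
    Algebra.norm_algebraMap, map_pow]

theorem inv_pow_eq_neg_pow_sub {L : Type*} [Field L] {ζ : L} {N j : ℕ} (h : ζ ^ N = -1)
    (hj : j ≤ N) : ζ⁻¹ ^ j = -ζ ^ (N - j) := by
  rw [inv_pow]
  refine (eq_inv_of_mul_eq_one_left ?_).symm
  rw [neg_mul, ← pow_add, Nat.sub_add_cancel hj, h, neg_neg]

-- `b₀ - b₃ + b₄ - b₂₂ - b₃₄ - b₅₃` with `ζ⁻ʲ = -ζ^(128-j)`: e.g. `-b₃ = -X³ + X¹²⁵`.
def coeffs6143 : List ℤ :=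
  ofTerms [(0, 1), (3, -1), (125, 1), (4, 1), (124, -1), (22, -1), (106, 1), (34, -1), (94, 1),
    (53, -1), (75, 1)]

set_option maxRecDepth 2000 in
theorem graeffeNorm_coeffs6143 : graeffeNorm 7 coeffs6143 = 6143 ^ 2 := by decide

/-- In `K = ℚ(ζ_256 + ζ_256⁻¹)`, the element `b_0 - b_3 + b_4 - b_22 - b_34 - b_53`
(where `b_0 = 1`, `b_j = ζ^j + ζ^{-j}`) has absolute norm `6143`. -/
theorem norm_6143_real_cyclotomic_256 (ζ : CyclotomicField 256 ℚ)
    (hζ : IsPrimitiveRoot ζ 256)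
    (K : IntermediateField ℚ (CyclotomicField 256 ℚ)) (hK : K = ℚ⟮ζ + ζ⁻¹⟯)
    (x : K) (hx : (x : CyclotomicField 256 ℚ) =
      1 - (ζ ^ 3 + ζ⁻¹ ^ 3) + (ζ ^ 4 + ζ⁻¹ ^ 4) - (ζ ^ 22 + ζ⁻¹ ^ 22)
        - (ζ ^ 34 + ζ⁻¹ ^ 34) - (ζ ^ 53 + ζ⁻¹ ^ 53)) :
    |Algebra.norm ℚ x| = 6143 := by
  have : IsCyclotomicExtension {2 ^ (7 + 1)} ℚ (CyclotomicField 256 ℚ) :=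
    CyclotomicField.isCyclotomicExtension 256 ℚ
  have hζ' : IsPrimitiveRoot ζ (2 ^ (7 + 1)) := hζ
  have h128 : ζ ^ 128 = -1 := hζ'.pow_two_pow_eq_neg_one
  have hxeval : (x : CyclotomicField 256 ℚ) = eval ζ coeffs6143 := by
    simp only [hx, coeffs6143, eval_ofTerms, List.map_cons, List.map_nil, List.sum_cons,
      List.sum_nil, inv_pow_eq_neg_pow_sub h128 (by norm_num : 3 ≤ 128),
      inv_pow_eq_neg_pow_sub h128 (by norm_num : 4 ≤ 128),
      inv_pow_eq_neg_pow_sub h128 (by norm_num : 22 ≤ 128),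
      inv_pow_eq_neg_pow_sub h128 (by norm_num : 34 ≤ 128),
      inv_pow_eq_neg_pow_sub h128 (by norm_num : 53 ≤ 128)]
    push_cast; ring
  have hnormL : Algebra.norm ℚ (x : CyclotomicField 256 ℚ) = 6143 ^ 2 := by
    rw [hxeval, hζ'.norm_eval_eq_graeffeNorm, graeffeNorm_coeffs6143]; norm_num
  subst hK
  rw [IntermediateField.norm_coe_eq_norm_pow_finrank, hζ.finrank_adjoin_add_inv (by norm_num)]
    at hnormL
  rw [← abs_of_pos (by norm_num : (0 : ℚ) < 6143)]
  exact sq_eq_sq_iff_abs_eq_abs _ _ |>.mp hnormL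
end

section
/- Suppose K is a Galois number field, p and q distinct primes, x, y ∈ O_K with |N(x)| = p·q and |N(y)| = q, and suppose every prime of K above q is principal and generated by a Galois conjugate of y. Then there exists a Galois automorphism σ such that x/σ(y) ∈ O_K and |N(x/σ(y))| = p. -/
open NumberField

theorem exists_conjugate_divisor_general (K : Type*) [Field K] [NumberField K]
    (p q : ℕ) (hq : q.Prime)
    (x y : 𝓞 K) (hx : (Algebra.norm ℤ x).natAbs = p * q)
    (hy : (Algebra.norm ℤ y).natAbs = q)
    (hprin : ∀ Q : Ideal (𝓞 K), Q.IsPrime →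
      Ideal.comap (algebraMap ℤ (𝓞 K)) Q = Ideal.span {(q : ℤ)} →
      ∃ σ : K ≃ₐ[ℚ] K, Q = Ideal.span {galRestrict ℤ ℚ K (𝓞 K) σ y}) :
    ∃ σ : K ≃ₐ[ℚ] K, ∃ z : 𝓞 K,
      x = galRestrict ℤ ℚ K (𝓞 K) σ y * z ∧ (Algebra.norm ℤ z).natAbs = p := by
  obtain ⟨P, hPmax, hPq, hPx⟩ := Ideal.exists_isMaximal_dvd_of_dvd_absNorm' hq (Ideal.span {x})
    (by rw [Ideal.absNorm_span_singleton, hx]; exact dvd_mul_left q p)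
  obtain ⟨σ, rfl⟩ := hprin P hPmax.isPrime hPq
  obtain ⟨z, rfl⟩ := Ideal.mem_span_singleton.mp (Ideal.dvd_span_singleton.mp hPx)
  refine ⟨σ, z, rfl, ?_⟩
  rw [map_mul, Int.natAbs_mul, Algebra.norm_eq_of_algEquiv, hy, mul_comm p] at hx
  exact Nat.eq_of_mul_eq_mul_left hq.pos hx

/-- Suppose `K` is a Galois number field, `p ≠ q` are primes, `x, y ∈ O_K` with
`|N(x)| = p·q` and `|N(y)| = q`, and every prime of `K` above `q` is principal,
generated by a Galois conjugate of `y`. Then there is a Galois automorphism `σ`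
such that `x/σ(y) ∈ O_K` and `|N(x/σ(y))| = p`. -/
theorem exists_conjugate_divisor (K : Type*) [Field K] [NumberField K] [IsGalois ℚ K]
    (p q : ℕ) (hp : p.Prime) (hq : q.Prime) (hpq : p ≠ q)
    (x y : 𝓞 K) (hx : (Algebra.norm ℤ x).natAbs = p * q)
    (hy : (Algebra.norm ℤ y).natAbs = q)
    (hprin : ∀ Q : Ideal (𝓞 K), Q.IsPrime →
      Ideal.comap (algebraMap ℤ (𝓞 K)) Q = Ideal.span {(q : ℤ)} →
      ∃ σ : K ≃ₐ[ℚ] K, Q = Ideal.span {galRestrict ℤ ℚ K (𝓞 K) σ y}) :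
    ∃ σ : K ≃ₐ[ℚ] K, ∃ z : 𝓞 K,
      x = galRestrict ℤ ℚ K (𝓞 K) σ y * z ∧ (Algebra.norm ℤ z).natAbs = p :=
  exists_conjugate_divisor_general K p q hq x y hx hy hprin
end
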